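/- arXiv:1804.05880 — 2 statements merged into one kernel-verified Lean document; each statement's English description precedes it below -/
import Mathlib

section
/- All supersets of a bound-variable set retain the bound effect property: let w : Set S → Set S be monotone and let B ⊆ V have the bound effect property for w, i.e., for all states ω and all X ⊆ S, ω ∈ w(X) iff ω ∈ w(X↓ω Bᶜ), where Bᶜ = V \ B. Then every W ⊆ V with W ⊇ B also has the bound effect property for w: for all states ω and all X ⊆ S, ω ∈ w(X) iff ω ∈ w(X↓ω Wᶜ). -/
/-- States map variables to reals. -/
def GState (V : Type*) := V → ℝ

/-- Two states agree on a set of variables `U`. -/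
def agreeOn {V : Type*} (ω ν : GState V) (U : Set V) : Prop :=
  ∀ x ∈ U, ω x = ν x

/-- Upward projection `X↑U`. -/
def upProj {V : Type*} (X : Set (GState V)) (U : Set V) : Set (GState V) :=
  {ν | ∃ ω ∈ X, agreeOn ω ν U}

/-- Downward projection `X↓ω U`. -/
def downProj {V : Type*} (X : Set (GState V)) (ω : GState V) (U : Set V) : Set (GState V) :=
  {ν ∈ X | agreeOn ω ν U}

section DownProj

variable {V : Type*} {X : Set (GState V)} {ω ν : GState V} {U U' : Set V}

theorem agreeOn.mono (hU : U ⊆ U') (h : agreeOn ω ν U') : agreeOn ω ν U :=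
  fun x hx => h x (hU hx)

theorem downProj_subset : downProj X ω U ⊆ X :=
  fun _ hν => hν.1

theorem downProj_anti (hU : U ⊆ U') : downProj X ω U' ⊆ downProj X ω U :=
  fun _ ⟨hνX, hagree⟩ => ⟨hνX, hagree.mono hU⟩

end DownProj

/-- All supersets of a bound-variable set retain the bound effect property. -/
theorem bound_effect_superset {V : Type*} (w : Set (GState V) → Set (GState V))
    (hw : ∀ X Y : Set (GState V), X ⊆ Y → w X ⊆ w Y)
    (B W : Set V)
    (hB : ∀ (ω : GState V) (X : Set (GState V)), ω ∈ w X ↔ ω ∈ w (downProj X ω Bᶜ))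
    (hBW : B ⊆ W) :
    ∀ (ω : GState V) (X : Set (GState V)), ω ∈ w X ↔ ω ∈ w (downProj X ω Wᶜ) := by
  intro ω X
  have hsub : downProj X ω Bᶜ ⊆ downProj X ω Wᶜ :=
    downProj_anti (Set.compl_subset_compl.mpr hBW)
  exact ⟨fun h => hw _ _ hsub ((hB ω X).mp h), fun h => hw _ _ downProj_subset h⟩
end

section
/- The family of variable sets whose downward projection does not change winning regions is closed under binary union: let w : Set S → Set S, and suppose M₁ ⊆ V and M₂ ⊆ V each satisfy: for all states ω and all X ⊆ S, ω ∈ w(X) iff ω ∈ w(X↓ω Mᵢ). Then M₁ ∪ M₂ also satisfies: for all states ω and all X ⊆ S, ω ∈ w(X) iff ω ∈ w(X↓ω (M₁ ∪ M₂)). -/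
theorem agreeOn_union {V : Type*} (ω ν : GState V) (M₁ M₂ : Set V) :
    agreeOn ω ν (M₁ ∪ M₂) ↔ agreeOn ω ν M₁ ∧ agreeOn ω ν M₂ := by
  simp only [agreeOn, Set.mem_union, or_imp, forall_and]

theorem downProj_downProj {V : Type*} (X : Set (GState V)) (ω : GState V) (M₁ M₂ : Set V) :
    downProj (downProj X ω M₁) ω M₂ = downProj X ω (M₁ ∪ M₂) := by
  ext ν
  simp only [downProj, Set.mem_ofPred_eq, agreeOn_union, and_assoc]

/-- The family of variable sets whose downward projection does not change
winning regions is closed under binary union. -/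
theorem downProj_invariant_union {V : Type*} (w : Set (GState V) → Set (GState V))
    (M₁ M₂ : Set V)
    (h₁ : ∀ (ω : GState V) (X : Set (GState V)), ω ∈ w X ↔ ω ∈ w (downProj X ω M₁))
    (h₂ : ∀ (ω : GState V) (X : Set (GState V)), ω ∈ w X ↔ ω ∈ w (downProj X ω M₂)) :
    ∀ (ω : GState V) (X : Set (GState V)),
      ω ∈ w X ↔ ω ∈ w (downProj X ω (M₁ ∪ M₂)) := by
  intro ω X
  rw [h₁ ω X, h₂ ω (downProj X ω M₁), downProj_downProj]
end
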